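/- Let E₀ ⊆ E ⊆ R^d where E is compact with positive Lebesgue measure, contained in a dyadic cube Q₀. For each δ ∈ (0,1) there is a compact set E₀ ⊆ E with |E₀| ≥ (1−δ)|E| such that E₀ is a c-serious subset of E with c = (δ|E|/|Q₀|)^{1/d} / (8 d^{1/2} 3^d); that is, for every x ∈ E₀ and 0 < t < diam E₀ there exists y ∈ E with c·t ≤ |x−y| ≤ t. -/

import Mathlib

/-!
Keep the points `x` at which `E` occupies, at every scale `r ≤ l`, a fixed proportion
`κ = δ|E|/|Q₀|` (up to the constant `15⁻ᵈ`) of the cube `closedBall x r`. This set is closed, and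
by the Vitali covering lemma the points of `E` outside it have measure at most `κ |Q₀| = δ|E|`.
At a kept point `x`, if `E` had no point at distance between `c t` and `t` from `x`, then
`E ∩ closedBall x t` would lie in `closedBall x (c t)`, whose volume `(2ct)ᵈ` is too small for
the density bound once `(15 c)ᵈ < κ`.
-/

open MeasureTheory Metric Set ENNReal

/-- The axis-parallel cube with corner `a` and side length `l`. -/
def cube {d : ℕ} (a : Fin d → ℝ) (l : ℝ) : Set (Fin d → ℝ) :=
  Set.Icc a (fun i => a i + l)

section MetricMeasure

variable {X : Type*} [PseudoMetricSpace X] [MeasurableSpace X] (μ : Measure X)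

theorem isClosed_setOf_forall_le_measure_inter_closedBall (s : Set X)
    {g : ℝ → ℝ≥0∞} (hg : Continuous g) (l : ℝ) :
    IsClosed {x | ∀ r, 0 < r → r ≤ l → g r ≤ μ (s ∩ closedBall x r)} := by
  refine isClosed_of_closure_subset fun x hx r hr hrl => ?_
  have below : ∀ r' ∈ Ioo 0 r, g r' ≤ μ (s ∩ closedBall x r) := by
    rintro r' ⟨hr'0, hr'r⟩
    obtain ⟨y, hy, hxy⟩ := Metric.mem_closure_iff.1 hx (r - r') (by linarith)
    refine (hy r' hr'0 (by linarith)).trans (measure_mono (inter_subset_inter_right _ ?_))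
    exact closedBall_subset_closedBall' (by rw [dist_comm]; linarith)
  exact le_of_tendsto ((hg.tendsto r).mono_left nhdsWithin_le_nhds)
    (Filter.mem_of_superset (Ioo_mem_nhdsLT hr) below)

theorem measure_le_mul_of_measure_inter_closedBall_le [TopologicalSpace.SeparableSpace X]
    [OpensMeasurableSpace X] {S U : Set X} {γ : ℝ≥0∞} {ρ : X → ℝ} {R : ℝ}
    (hρ_pos : ∀ x ∈ S, 0 < ρ x) (hρR : ∀ x ∈ S, ρ x ≤ R)
    (hU : ∀ x ∈ S, closedBall x (ρ x / 5) ⊆ U)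
    (hle : ∀ x ∈ S, μ (S ∩ closedBall x (ρ x)) ≤ γ * μ (closedBall x (ρ x / 5))) :
    μ S ≤ γ * μ U := by
  obtain ⟨u, huS, hdisj, hcov⟩ :=
    Vitali.exists_disjoint_subfamily_covering_enlargement_closedBall S id (fun x => ρ x / 5)
      (R / 5) (fun x hx => by linarith [hρR x hx]) 5 (by norm_num)
  simp only [id] at hdisj hcov
  have hu : u.Countable := hdisj.countable_of_nonempty_interior fun b hb =>
    (nonempty_ball.2 (by linarith [hρ_pos b (huS hb)])).mono ball_subset_interior_closedBall
  have hSu : S ⊆ ⋃ b ∈ u, S ∩ closedBall b (ρ b) := fun x hx => by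
    obtain ⟨b, hbu, hxb⟩ := hcov x hx
    have hx' := hxb (mem_closedBall_self (by linarith [hρ_pos x hx]))
    rw [mul_div_cancel₀ _ (by norm_num : (5 : ℝ) ≠ 0)] at hx'
    exact mem_biUnion hbu ⟨hx, hx'⟩
  calc μ S ≤ ∑' b : u, μ (S ∩ closedBall b (ρ b)) :=
        (measure_mono hSu).trans (measure_biUnion_le μ hu _)
    _ ≤ ∑' b : u, γ * μ (closedBall b (ρ b / 5)) :=
        ENNReal.tsum_le_tsum fun b => hle b (huS b.2)
    _ = γ * μ (⋃ b ∈ u, closedBall b (ρ b / 5)) := by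
        rw [ENNReal.tsum_mul_left, measure_biUnion hu hdisj fun b _ => measurableSet_closedBall]
    _ ≤ γ * μ U := by gcongr; exact iUnion₂_subset fun b hb => hU b (huS hb)

end MetricMeasure

section Cube

variable {d : ℕ}

theorem volume_cube (a : Fin d → ℝ) {l : ℝ} (hl : 0 ≤ l) :
    volume (cube a l) = ENNReal.ofReal (l ^ d) := by
  simp only [cube, Real.volume_Icc_pi, add_sub_cancel_left, Finset.prod_const, Finset.card_univ,
    Fintype.card_fin, ENNReal.ofReal_pow hl]

theorem diam_cube_le (a : Fin d → ℝ) {l : ℝ} (hl : 0 ≤ l) : diam (cube a l) ≤ l :=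
  diam_le_of_forall_dist_le hl fun p hp q hq => (dist_pi_le_iff hl).2 fun i => by
    have := hp.1 i; have := hp.2 i; have := hq.1 i; have := hq.2 i
    rw [Real.dist_eq, abs_sub_le_iff]
    constructor <;> linarith

theorem closedBall_subset_cube_of_mem {a b : Fin d → ℝ} {l r : ℝ} (hb : b ∈ cube a l)
    (hrl : r ≤ l) : closedBall b r ⊆ cube (fun i => a i - l) (3 * l) := fun y hy => by
  refine ⟨fun i => ?_, fun i => ?_⟩ <;>
  · have := hb.1 i; have := hb.2 i
    have := (abs_sub_le_iff.1 ((Real.dist_eq _ _).symm.trans_le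
      ((dist_le_pi_dist y b i).trans ((mem_closedBall.1 hy).trans hrl))))
    dsimp only at *
    linarith

end Cube

section DensePoints

variable {d : ℕ}

/- `(2 * r) ^ d` is the volume of the sup-metric ball `closedBall x r`; the factor `15 = 5 * 3` pays
for the radius `r / 5` of the Vitali covering and for the cube of side `3 * l` containing it. -/
def uniformlyDensePoints (E : Set (Fin d → ℝ)) (κ l : ℝ) : Set (Fin d → ℝ) :=
  {x | ∀ r, 0 < r → r ≤ l →
    ENNReal.ofReal (κ * (2 * r / 15) ^ d) ≤ volume (E ∩ closedBall x r)}

theorem isClosed_uniformlyDensePoints (E : Set (Fin d → ℝ)) (κ l : ℝ) :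
    IsClosed (uniformlyDensePoints E κ l) :=
  isClosed_setOf_forall_le_measure_inter_closedBall volume E
    (ENNReal.continuous_ofReal.comp (by fun_prop)) l

theorem volume_diff_uniformlyDensePoints_le {E : Set (Fin d → ℝ)} {a : Fin d → ℝ} {κ l : ℝ}
    (hEQ : E ⊆ cube a l) (hl : 0 ≤ l) (hκ : 0 ≤ κ) :
    volume (E \ uniformlyDensePoints E κ l) ≤ ENNReal.ofReal (κ * l ^ d) := by
  have hsparse : ∀ x ∈ E \ uniformlyDensePoints E κ l, ∃ r, 0 < r ∧ r ≤ l ∧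
      volume (E ∩ closedBall x r) < ENNReal.ofReal (κ * (2 * r / 15) ^ d) := by
    intro x hx
    simpa [uniformlyDensePoints] using hx.2
  choose! ρ hρ_pos hρl hρ using hsparse
  have hγ : ∀ (x : Fin d → ℝ) r, 0 ≤ r → ENNReal.ofReal (κ * (2 * r / 15) ^ d) =
      ENNReal.ofReal (κ / 3 ^ d) * volume (closedBall x (r / 5)) := by
    intro x r hr
    rw [Real.volume_pi_closedBall _ (by positivity), Fintype.card_fin,
      ← ENNReal.ofReal_mul (by positivity), show 2 * r / 15 = (2 * (r / 5)) / 3 by ring,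
      div_pow, mul_div_assoc', div_mul_eq_mul_div]
  calc volume (E \ uniformlyDensePoints E κ l)
      ≤ ENNReal.ofReal (κ / 3 ^ d) * volume (cube (fun i => a i - l) (3 * l)) := by
        refine measure_le_mul_of_measure_inter_closedBall_le volume hρ_pos hρl (fun x hx =>
          closedBall_subset_cube_of_mem (hEQ hx.1) (by linarith [hρl x hx, hρ_pos x hx]))
          fun x hx => ?_
        calc volume ((E \ uniformlyDensePoints E κ l) ∩ closedBall x (ρ x))
            ≤ volume (E ∩ closedBall x (ρ x)) :=
              measure_mono (inter_subset_inter_left _ sdiff_subset)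
          _ ≤ _ := (hρ x hx).le
          _ = _ := hγ x _ (hρ_pos x hx).le
    _ = ENNReal.ofReal (κ * l ^ d) := by
        rw [volume_cube _ (by positivity), ← ENNReal.ofReal_mul (by positivity)]
        congr 1
        field_simp
        ring

theorem exists_mem_le_dist_le_of_mem_uniformlyDensePoints {E : Set (Fin d → ℝ)}
    {κ l c t : ℝ} {x : Fin d → ℝ} (hx : x ∈ uniformlyDensePoints E κ l) (ht : 0 < t) (htl : t ≤ l)
    (hc : 0 ≤ c) (hcκ : (15 * c) ^ d < κ) : ∃ y ∈ E, c * t ≤ dist x y ∧ dist x y ≤ t := by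
  by_contra! hgap
  have hsub : E ∩ closedBall x t ⊆ closedBall x (c * t) := fun y ⟨hyE, hyt⟩ => by
    rw [mem_closedBall, dist_comm] at hyt ⊢
    by_contra! hyc
    exact (hgap y hyE hyc.le).not_ge hyt
  have hvol := (hx t ht htl).trans ((measure_mono hsub).trans_eq
    (Real.volume_pi_closedBall _ (by positivity)))
  rw [Fintype.card_fin, ENNReal.ofReal_le_ofReal_iff (by positivity),
    show 2 * (c * t) = 15 * c * (2 * t / 15) by ring, mul_pow] at hvol
  exact hvol.not_gt (mul_lt_mul_of_pos_right hcκ (by positivity))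

end DensePoints

theorem fifteen_mul_rpow_div_pow_lt {d : ℕ} (hd : 0 < d) {κ : ℝ} (hκ : 0 < κ) :
    (15 * (κ ^ (1 / (d : ℝ)) / (8 * √d * 3 ^ d))) ^ d < κ := by
  have hK : 15 < 8 * √d * 3 ^ d := by
    have : (1 : ℝ) ≤ √d := Real.one_le_sqrt.2 (by exact_mod_cast hd)
    have : (3 : ℝ) ≤ 3 ^ d := le_self_pow₀ (by norm_num) hd.ne'
    nlinarith
  rw [mul_div_left_comm, mul_pow, one_div, Real.rpow_inv_natCast_pow hκ.le hd.ne']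
  exact mul_lt_of_lt_one_right hκ (pow_lt_one₀ (by positivity) ((div_lt_one (by linarith)).2 hK)
    hd.ne')

theorem exists_serious_subset (d : ℕ) (hd : 0 < d)
    (a : Fin d → ℝ) (l : ℝ) (hl : 0 < l)
    (E : Set (Fin d → ℝ)) (hE : IsCompact E) (hEQ : E ⊆ cube a l)
    (hpos : 0 < volume E) (δ : ℝ) (hδ : 0 < δ) (hδ1 : δ < 1) :
    ∃ E₀ : Set (Fin d → ℝ), E₀ ⊆ E ∧ IsCompact E₀ ∧
      ENNReal.ofReal (1 - δ) * volume E ≤ volume E₀ ∧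
      ∀ x ∈ E₀, ∀ t : ℝ, 0 < t → t < Metric.diam E₀ →
        ∃ y ∈ E,
          ((δ * (volume E).toReal / (volume (cube a l)).toReal) ^ (1 / (d : ℝ))
              / (8 * Real.sqrt d * 3 ^ d)) * t ≤ dist x y ∧ dist x y ≤ t := by
  have hEfin : volume E ≠ ⊤ := hE.measure_lt_top.ne
  rw [volume_cube a hl.le, toReal_ofReal (by positivity)]
  set κ := δ * (volume E).toReal / l ^ d
  have hκ : 0 < κ := by have := ENNReal.toReal_pos hpos.ne' hEfin; positivity
  have hD := isClosed_uniformlyDensePoints E κ l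
  have hbad : volume (E \ uniformlyDensePoints E κ l) ≤ ENNReal.ofReal δ * volume E := by
    refine (volume_diff_uniformlyDensePoints_le hEQ hl.le hκ.le).trans_eq ?_
    rw [div_mul_cancel₀ _ (by positivity), ENNReal.ofReal_mul hδ.le, ofReal_toReal hEfin]
  refine ⟨E ∩ uniformlyDensePoints E κ l, inter_subset_left, hE.inter_right hD, ?_, ?_⟩
  · refine (ENNReal.add_le_add_iff_right (mul_ne_top (ofReal_ne_top (r := δ)) hEfin)).1 ?_
    calc ENNReal.ofReal (1 - δ) * volume E + ENNReal.ofReal δ * volume E = volume E := by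
          rw [← add_mul, ← ENNReal.ofReal_add (by linarith) hδ.le, sub_add_cancel, ofReal_one,
            one_mul]
      _ = volume (E ∩ _) + volume (E \ _) := (measure_inter_add_sdiff E hD.measurableSet).symm
      _ ≤ _ := by gcongr
  · intro x hx t ht htd
    have htl : t ≤ l := htd.le.trans ((diam_mono (inter_subset_left.trans hEQ)
      (isBounded_Icc _ _)).trans (diam_cube_le a hl.le))
    exact exists_mem_le_dist_le_of_mem_uniformlyDensePoints hx.2 ht htl (by positivity)
      (fifteen_mul_rpow_div_pow_lt hd hκ)
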